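/- arXiv:2504.19052 — 8 statements merged into one kernel-verified Lean document; each statement's English description precedes it below -/
import Mathlib

section
/- For all integers n with 1 ≤ n ≤ k+1, the n-th k-generalized Pell number equals the (2n-1)-th Fibonacci number: P_n^{(k)} = F_{2n-1}. -/
/-! While `n ≤ k + 1`, every term `P (n - i)` with `i ≥ n` lies in the block of initial zeros, so
the recurrence reduces to `P n = 2 P (n-1) + P (n-2) + ⋯ + P 1`. The odd-indexed Fibonacci numbers
satisfy the same recurrence, because `F₁ + F₃ + ⋯ + F_{2m-1} = F_{2m}`. -/

open Finset

theorem Nat.sum_range_fib_two_mul_add_one (m : ℕ) :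
    ∑ j ∈ range m, fib (2 * j + 1) = fib (2 * m) := by
  induction m with
  | zero => simp
  | succ m ih => rw [sum_range_succ, ih, mul_add_one, fib_add_two]

theorem Nat.fib_two_mul_add_three (m : ℕ) :
    fib (2 * m + 3) = 2 * fib (2 * m + 1) + ∑ j ∈ range m, fib (2 * j + 1) := by
  rw [sum_range_fib_two_mul_add_one, fib_add_two (n := 2 * m + 1), fib_add_two (n := 2 * m)]
  ring

theorem eq_fib_two_mul_add_one_of_recurrence (a : ℕ → ℤ) (N : ℕ) (h0 : a 0 = 1)
    (hrec : ∀ m < N, a (m + 1) = 2 * a m + ∑ j ∈ range m, a j) :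
    ∀ m ≤ N, a m = Nat.fib (2 * m + 1) := by
  intro m
  induction m using Nat.strong_induction_on with
  | _ m ih =>
    intro hm
    cases m with
    | zero => simp [h0]
    | succ m =>
      have hsum : ∑ j ∈ range m, a j = ∑ j ∈ range m, (Nat.fib (2 * j + 1) : ℤ) :=
        sum_congr rfl fun j hj => ih j (by simp at hj; omega) (by simp at hj; omega)
      rw [hrec m (by omega), hsum, ih m (by omega) (by omega), mul_add_one, add_assoc,
        Nat.fib_two_mul_add_three]
      push_cast
      rfl

theorem kPell_succ_succ (k : ℕ) (P : ℤ → ℤ)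
    (hP0 : ∀ n : ℤ, 2 - (k : ℤ) ≤ n → n ≤ 0 → P n = 0)
    (hPrec : ∀ n : ℤ, 2 ≤ n → P n = 2 * P (n - 1) + ∑ i ∈ Icc (2 : ℕ) k, P (n - i))
    (m : ℕ) (hm : m < k) :
    P (m + 2) = 2 * P (m + 1) + ∑ j ∈ range m, P (j + 1) := by
  have hreindex : ∑ i ∈ Icc (2 : ℕ) k, P (m + 2 - i) = ∑ j ∈ range (k - 1), P (m - j) := by
    rw [← Ico_add_one_right_eq_Icc, sum_Ico_eq_sum_range, show k + 1 - 2 = k - 1 by omega]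
    exact sum_congr rfl fun j _ => by push_cast; ring_nf
  have hvanish : ∑ j ∈ Ico m (k - 1), P (m - j) = 0 :=
    sum_eq_zero fun j hj => by simp only [mem_Ico] at hj; exact hP0 _ (by omega) (by omega)
  have hreflect : ∑ j ∈ range m, P (m - j) = ∑ j ∈ range m, P (j + 1) := by
    rw [← sum_range_reflect]
    refine sum_congr rfl fun j hj => ?_
    simp only [mem_range] at hj
    congr 1
    omega
  rw [hPrec _ (by omega), hreindex, ← sum_range_add_sum_Ico _ (by omega : m ≤ k - 1), hvanish,
    hreflect, add_zero, add_sub_assoc]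
  norm_num

theorem kPell_eq_fib_general (k : ℕ) (P : ℤ → ℤ)
    (hP0 : ∀ n : ℤ, 2 - (k : ℤ) ≤ n → n ≤ 0 → P n = 0)
    (hP1 : P 1 = 1)
    (hPrec : ∀ n : ℤ, 2 ≤ n → P n = 2 * P (n - 1) + ∑ i ∈ Finset.Icc (2 : ℕ) k, P (n - i)) :
    ∀ n : ℕ, 1 ≤ n → n ≤ k + 1 → P (n : ℤ) = (Nat.fib (2 * n - 1) : ℤ) := by
  rintro _ hn hnk
  obtain ⟨m, rfl⟩ := Nat.exists_eq_add_of_le' hn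
  have key := eq_fib_two_mul_add_one_of_recurrence (fun m => P (m + 1)) k (by simpa using hP1)
    (fun m hm => by exact_mod_cast kPell_succ_succ k P hP0 hPrec m hm) m (by omega)
  rw [show 2 * (m + 1) - 1 = 2 * m + 1 by omega]
  exact_mod_cast key

/-- For all integers n with 1 ≤ n ≤ k+1, the n-th k-generalized Pell number equals
the (2n-1)-th Fibonacci number. -/
theorem kPell_eq_fib (k : ℕ) (hk : 2 ≤ k) (P : ℤ → ℤ)
    (hP0 : ∀ n : ℤ, 2 - (k : ℤ) ≤ n → n ≤ 0 → P n = 0)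
    (hP1 : P 1 = 1)
    (hPrec : ∀ n : ℤ, 2 ≤ n → P n = 2 * P (n - 1) + ∑ i ∈ Finset.Icc (2 : ℕ) k, P (n - i)) :
    ∀ n : ℕ, 1 ≤ n → n ≤ k + 1 → P (n : ℤ) = (Nat.fib (2 * n - 1) : ℤ) :=
  kPell_eq_fib_general k P hP0 hP1 hPrec
end

section
/- For every integer k ≥ 2, the polynomial Ψ_k(x) = x^k - 2x^{k-1} - x^{k-2} - ... - x - 1 has exactly one real root greater than 1. -/
/-!
Dividing by `x ^ (k - 1)` turns `Ψ_k(x) = 0` into `x - 2 = ∑_{i=1}^{k-1} x⁻ⁱ` for `x > 0`.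
The left side increases and the right side decreases on `(0, ∞)`, so there is at most one
root there; the difference is negative at `x = 1` and positive at `x = 3`, so by the
intermediate value theorem there is one in `(1, 3)`.
-/

open Finset

/-- `Ψ_{n+1}(x) / x ^ n`. -/
def kPellNormalized {K : Type*} [DivisionRing K] (n : ℕ) (x : K) : K :=
  x - 2 - ∑ i ∈ range n, x⁻¹ ^ (i + 1)

section Field

variable {K : Type*} [Field K]

theorem pow_mul_kPellNormalized (n : ℕ) {x : K} (hx : x ≠ 0) :
    x ^ n * kPellNormalized n x = x ^ (n + 1) - 2 * x ^ n - ∑ i ∈ range n, x ^ i := by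
  have hterm : ∀ i ∈ range n, x ^ n * x⁻¹ ^ (i + 1) = x ^ (n - 1 - i) := by
    intro i hi
    rw [mem_range] at hi
    rw [inv_pow, ← pow_sub₀ x hx (by omega : i + 1 ≤ n)]
    congr 1
    omega
  rw [kPellNormalized, mul_sub, mul_sub, mul_sum, sum_congr rfl hterm,
    sum_range_reflect (x ^ ·) n, pow_succ]
  ring

variable [LinearOrder K] [IsStrictOrderedRing K]

theorem kPellNormalized_strictMonoOn (n : ℕ) :
    StrictMonoOn (kPellNormalized (K := K) n) (Set.Ioi 0) := by
  intro a ha b _ hab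
  have hsum : ∑ i ∈ range n, b⁻¹ ^ (i + 1) ≤ ∑ i ∈ range n, a⁻¹ ^ (i + 1) :=
    sum_le_sum fun i _ =>
      pow_le_pow_left₀ (inv_nonneg.2 (ha.out.trans hab).le) (inv_anti₀ ha hab.le) _
  simp only [kPellNormalized]
  linarith

theorem kPellNormalized_one_neg (n : ℕ) : kPellNormalized n (1 : K) < 0 := by
  have : (0 : K) ≤ n := n.cast_nonneg
  simp only [kPellNormalized, inv_one, one_pow, sum_const, card_range, nsmul_eq_mul, mul_one]
  linarith

theorem kPellNormalized_three_pos (n : ℕ) : 0 < kPellNormalized n (3 : K) := by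
  have hgeom : ∑ i ∈ range n, (3 : K)⁻¹ ^ i ≤ 3 / 2 := by
    have := geom_sum_Ico_le_of_lt_one (m := 0) (n := n) (x := (3 : K)⁻¹)
      (by norm_num) (by norm_num)
    rw [← range_eq_Ico] at this
    linarith [show (3 : K)⁻¹ ^ 0 / (1 - 3⁻¹) = 3 / 2 by norm_num]
  have hsum : ∑ i ∈ range n, (3 : K)⁻¹ ^ (i + 1) ≤ 1 / 2 := by
    simp only [pow_succ', ← mul_sum]
    linarith
  simp only [kPellNormalized]
  linarith

end Field

theorem continuousOn_kPellNormalized (n : ℕ) :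
    ContinuousOn (kPellNormalized (K := ℝ) n) (Set.Ioi 0) := by
  unfold kPellNormalized
  exact ContinuousOn.sub (by fun_prop) (continuousOn_finsetSum _ fun i _ =>
    (continuousOn_inv₀.mono fun x hx => ne_of_gt hx).pow _)

theorem existsUnique_kPellNormalized_eq_zero (n : ℕ) :
    ∃! x : ℝ, 1 < x ∧ kPellNormalized n x = 0 := by
  obtain ⟨x, hx, hroot⟩ := intermediate_value_Ioo (by norm_num : (1 : ℝ) ≤ 3)
    ((continuousOn_kPellNormalized n).mono fun y hy => by simp only [Set.mem_Ioi]; linarith [hy.1])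
    ⟨kPellNormalized_one_neg n, kPellNormalized_three_pos n⟩
  refine ⟨x, ⟨hx.1, hroot⟩, fun y ⟨hy, hyroot⟩ => ?_⟩
  exact (kPellNormalized_strictMonoOn n).injOn (zero_lt_one.trans hy) (zero_lt_one.trans hx.1)
    (hyroot.trans hroot.symm)

/-- For every k ≥ 2, the polynomial Ψ_k(x) = x^k - 2x^{k-1} - x^{k-2} - ⋯ - x - 1
has exactly one real root greater than 1. -/
theorem kPell_char_poly_unique_root (k : ℕ) (hk : 2 ≤ k) :
    ∃! α : ℝ, 1 < α ∧
      α ^ k - 2 * α ^ (k - 1) - ∑ i ∈ Finset.range (k - 1), α ^ i = 0 := by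
  obtain ⟨n, rfl⟩ : ∃ n, k = n + 1 := ⟨k - 1, by omega⟩
  rw [Nat.add_sub_cancel]
  refine (existsUnique_congr fun x => and_congr_right fun hx => ?_).1
    (existsUnique_kPellNormalized_eq_zero n)
  have hx0 : x ≠ 0 := (zero_lt_one.trans hx).ne'
  rw [← pow_mul_kPellNormalized n hx0, mul_eq_zero, or_iff_right (pow_ne_zero n hx0)]
end

section
/- For every integer k ≥ 2, the unique real root α = α(k) > 1 of Ψ_k(x) = x^k - 2x^{k-1} - ... - x - 1 satisfies φ²(1 - φ^{-k}) < α < φ², where φ = (1+√5)/2 is the golden ratio. -/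
/-!
Multiplying `Ψ_k(α) = 0` by `α - 1` telescopes the geometric sum and gives
`α^(k-1) (α - φ²)(α - ψ²) = -1`, where `φ²` and `ψ² = φ⁻²` are the roots of `x² - 3x + 1`.
Since `α > 2 > 1 + ψ²`, the sign of this product forces `α < φ²`, and
`φ² - α = 1 / (α^(k-1) (α - ψ²)) < α^(1-k) ≤ φ^(1-k) < φ^(2-k)`.
-/

open Finset Real goldenRatio

/-- The polynomial `Ψ_k`, as a function. -/
def kPellPoly {R : Type*} [CommRing R] (k : ℕ) (x : R) : R :=
  x ^ k - 2 * x ^ (k - 1) - ∑ i ∈ range (k - 1), x ^ i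

theorem sub_one_mul_kPellPoly_succ {R : Type*} [CommRing R] (m : ℕ) (x : R) :
    (x - 1) * kPellPoly (m + 1) x = x ^ m * (x ^ 2 - 3 * x + 1) + 1 := by
  simp only [kPellPoly, Nat.add_sub_cancel]
  linear_combination -geom_sum_mul x m

theorem two_lt_of_kPellPoly_eq_zero {k : ℕ} (hk : 2 ≤ k) {x : ℝ} (hx : 0 < x)
    (hroot : kPellPoly k x = 0) : 2 < x := by
  obtain ⟨m, rfl⟩ : ∃ m, k = m + 1 := ⟨k - 1, by omega⟩
  have hsum : 0 < ∑ i ∈ range m, x ^ i :=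
    sum_pos (fun i _ => pow_pos hx i) (nonempty_range_iff.mpr (by omega))
  have hx_pow : x ^ m * x = 2 * x ^ m + ∑ i ∈ range m, x ^ i := by
    simp only [kPellPoly, Nat.add_sub_cancel] at hroot
    linear_combination hroot
  nlinarith [pow_pos hx m]

theorem goldenConj_sq_lt_one : ψ ^ 2 < 1 := by
  nlinarith [goldenConj_neg, neg_one_lt_goldenConj]

theorem sq_sub_three_mul_add_one_eq (x : ℝ) :
    x ^ 2 - 3 * x + 1 = (x - φ ^ 2) * (x - ψ ^ 2) := by
  linear_combination x * (goldenRatio_sq + goldenConj_sq + goldenRatio_add_goldenConj)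
    - (φ * ψ - 1) * goldenRatio_mul_goldenConj

/-- The dominant root α of Ψ_k satisfies φ²(1-φ^{-k}) < α < φ². -/
theorem kPell_root_bounds (k : ℕ) (hk : 2 ≤ k) (α : ℝ) (hα1 : 1 < α)
    (hroot : α ^ k - 2 * α ^ (k - 1) - ∑ i ∈ Finset.range (k - 1), α ^ i = 0) :
    ((1 + Real.sqrt 5) / 2) ^ 2 * (1 - 1 / ((1 + Real.sqrt 5) / 2) ^ k) < α ∧
      α < ((1 + Real.sqrt 5) / 2) ^ 2 := by
  change φ ^ 2 * (1 - 1 / φ ^ k) < α ∧ α < φ ^ 2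
  have hα2 : 2 < α := two_lt_of_kPellPoly_eq_zero hk (by linarith) hroot
  obtain ⟨m, rfl⟩ : ∃ m, k = m + 1 := ⟨k - 1, by omega⟩
  have hfactor : (φ ^ 2 - α) * (α ^ m * (α - ψ ^ 2)) = 1 := by
    have h := sub_one_mul_kPellPoly_succ m α
    rw [show kPellPoly (m + 1) α = 0 from hroot, sq_sub_three_mul_add_one_eq] at h
    linear_combination h
  have hαψ : 1 < α - ψ ^ 2 := by linarith [goldenConj_sq_lt_one]
  have hαm : 0 < α ^ m := pow_pos (by linarith) m
  have hgap : 0 < φ ^ 2 - α :=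
    (pos_iff_pos_of_mul_pos (hfactor ▸ one_pos)).2 (mul_pos hαm (by linarith))
  refine ⟨?_, sub_pos.1 hgap⟩
  have hφm : 0 < φ ^ m := pow_pos goldenRatio_pos m
  have hlower : (φ ^ 2 - α) * φ ^ m < φ :=
    calc (φ ^ 2 - α) * φ ^ m
        ≤ (φ ^ 2 - α) * α ^ m := by
          gcongr; linarith [goldenRatio_lt_two]
      _ < (φ ^ 2 - α) * (α ^ m * (α - ψ ^ 2)) := by
          gcongr; exact lt_mul_of_one_lt_right hαm hαψ
      _ = 1 := hfactor
      _ < φ := one_lt_goldenRatio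
  have hrw : φ ^ 2 * (1 - 1 / φ ^ (m + 1)) = φ ^ 2 - φ / φ ^ m := by
    field_simp
    ring
  rw [hrw]
  linarith [(lt_div_iff₀ hφm).2 hlower]
end

section
/- For all integers k ≥ 2 and n ≥ 1, the inequalities α^{n-2} ≤ P_n^{(k)} ≤ α^{n-1} hold, where α = α(k) is the dominant root of the characteristic polynomial of the k-generalized Pell sequence. -/
/-!
Writing `T_n = Σ_{i=2}^{k} P_{n-i}`, the recurrence reads `P_n = 2 P_{n-1} + T_n`, and `α^{n}` satisfies
the same recurrence for every integer `n`. The recurrence has nonnegative coefficients, so a bound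
between a solution and `α^{n-c}` on `k` consecutive indices propagates to all later indices. For the
upper bound the initial window is `2 - k ≤ n ≤ 1`, where `P_n ∈ {0, 1}`.

For the lower bound the window is `1 ≤ n ≤ k`. There the terms `P_{n-i}` with `n - i ≤ 0` vanish while
`α^{n-i-2}` does not, so the comparison is replaced by the joint induction
`α^{n-2} ≤ P_n`, `(α - 2) α^{n-2} ≤ T_{n+1}`, which closes because `α² ≤ 3α - 1`; this quadratic bound
follows from the characteristic equation multiplied by `α - 1`.
-/

open Finset

section Recurrence

variable {R : Type*}

def kPellTail [AddCommMonoid R] (k : ℕ) (f : ℤ → R) (n : ℤ) : R :=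
  ∑ i ∈ Icc (2 : ℕ) k, f (n - i)

def kPellRhs [Semiring R] (k : ℕ) (f : ℤ → R) (n : ℤ) : R :=
  2 * f (n - 1) + kPellTail k f n

theorem kPellTail_add_one_add [AddCommMonoid R] (f : ℤ → R) (n : ℤ) {k : ℕ} (hk : 1 ≤ k) :
    kPellTail k f (n + 1) + f (n - k) = f (n - 1) + kPellTail k f n := by
  induction k, hk using Nat.le_induction with
  | base => simp [kPellTail]
  | succ k hk ih =>
    simp only [kPellTail] at ih ⊢
    rw [sum_Icc_succ_top (by omega), sum_Icc_succ_top (by omega), ← add_assoc, ← ih]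
    push_cast
    ring_nf

theorem kPellRhs_mono [Semiring R] [PartialOrder R] [IsOrderedRing R] {k : ℕ} (hk : 1 ≤ k)
    {f g : ℤ → R} {n : ℤ} (h : ∀ m, n - k ≤ m → m < n → f m ≤ g m) :
    kPellRhs k f n ≤ kPellRhs k g n :=
  add_le_add (mul_le_mul_of_nonneg_left (h _ (by omega) (by omega)) zero_le_two)
    (sum_le_sum fun _ _ => h _ (by grind) (by grind))

theorem le_of_kPellRhs_of_initial_le [Semiring R] [PartialOrder R] [IsOrderedRing R] {k : ℕ}
    (hk : 1 ≤ k) {f g : ℤ → R} (a : ℤ) (hf : ∀ n, a + k ≤ n → f n ≤ kPellRhs k f n)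
    (hg : ∀ n, a + k ≤ n → kPellRhs k g n ≤ g n) (hinit : ∀ n, a ≤ n → n < a + k → f n ≤ g n) :
    ∀ n, a ≤ n → f n ≤ g n := by
  suffices ∀ m : ℕ, ∀ n, a ≤ n → n < a + m → f n ≤ g n from
    fun n hn => this (n - a + 1).toNat n hn (by omega)
  intro m
  induction m with
  | zero => intro n h1 h2; omega
  | succ m ih =>
    intro n hn hnm
    rcases lt_or_ge n (a + k) with hnk | hnk
    · exact hinit n hn hnk
    rcases lt_or_ge n (a + m) with hlt | hge
    · exact ih n hn hlt
    calc f n ≤ kPellRhs k f n := hf n hnk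
      _ ≤ kPellRhs k g n := kPellRhs_mono hk fun j hj hjn => ih j (by omega) (by omega)
      _ ≤ g n := hg n hnk

end Recurrence

section Root

variable {K : Type*} [Field K] {k : ℕ} {α : K}

theorem pow_eq_of_kPell_root (hk : 1 ≤ k)
    (hroot : α ^ k - 2 * α ^ (k - 1) - ∑ i ∈ range (k - 1), α ^ i = 0) :
    α ^ k = 2 * α ^ (k - 1) + ∑ i ∈ Icc (2 : ℕ) k, α ^ (k - i) := by
  have : ∑ i ∈ Icc (2 : ℕ) k, α ^ (k - i) = ∑ i ∈ range (k - 1), α ^ i :=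
    sum_nbij' (fun i => k - i) (fun i => k - i) (by grind) (by grind) (by grind) (by grind)
      fun _ _ => rfl
  rw [this]
  linear_combination hroot

theorem kPellRhs_zpow_sub (hα : α ≠ 0) (hk : 1 ≤ k)
    (hroot : α ^ k - 2 * α ^ (k - 1) - ∑ i ∈ range (k - 1), α ^ i = 0) (c m : ℤ) :
    kPellRhs k (fun n => α ^ (n - c)) m = α ^ (m - c) := by
  have hshift : ∀ j : ℕ, j ≤ k → α ^ (m - j - c) = α ^ (m - c - k) * α ^ (k - j) := by
    intro j hj
    rw [← zpow_natCast, ← zpow_add₀ hα]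
    congr 1
    push_cast [hj]
    ring
  have h1 := hshift 1 hk
  have h0 := hshift 0 (Nat.zero_le _)
  simp only [Nat.cast_zero, sub_zero, Nat.cast_one, Nat.sub_zero] at h0 h1
  simp only [kPellRhs, kPellTail]
  rw [h1, h0, pow_eq_of_kPell_root hk hroot, mul_add, mul_sum,
    sum_congr rfl fun i hi => hshift i (mem_Icc.mp hi).2]
  ring

theorem sq_le_three_mul_sub_one_of_kPell_root [LinearOrder K] [IsStrictOrderedRing K] (hα : 0 < α)
    (hk : 1 ≤ k) (hroot : α ^ k - 2 * α ^ (k - 1) - ∑ i ∈ range (k - 1), α ^ i = 0) :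
    α ^ 2 ≤ 3 * α - 1 := by
  have hpow : α ^ k = α ^ (k - 1) * α := by rw [← pow_succ, Nat.sub_add_cancel hk]
  have hsum : ∑ i ∈ range (k - 1), α ^ i = α ^ (k - 1) * (α - 2) := by
    linear_combination -hroot + hpow
  have hgeom : α ^ (k - 1) * (α ^ 2 - 3 * α + 1) = -1 := by
    have := geom_sum_mul α (k - 1)
    rw [hsum] at this
    linear_combination this
  nlinarith [pow_pos hα (k - 1)]

end Root

theorem zpow_sub_two_le_and_kPellTail {K : Type*} [Field K] [LinearOrder K] [IsStrictOrderedRing K]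
    {k : ℕ} {α : K} {p : ℤ → K} (hα : 1 ≤ α) (hquad : α ^ 2 ≤ 3 * α - 1)
    (hp0 : ∀ n : ℤ, 2 - k ≤ n → n ≤ 0 → p n = 0) (hp1 : p 1 = 1)
    (hrec : ∀ n : ℤ, 2 ≤ n → p n = kPellRhs k p n) (n : ℤ) (hn : 2 ≤ n) :
    n ≤ k → α ^ (n - 2) ≤ p n ∧ (α - 2) * α ^ (n - 2) ≤ kPellTail k p (n + 1) := by
  induction n, hn using Int.leInduction with
  | base =>
    intro h2k
    have hT2 : kPellTail k p 2 = 0 := sum_eq_zero fun i hi => hp0 _ (by grind) (by grind)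
    have hT3 : kPellTail k p (2 + 1) = 1 := by
      have := kPellTail_add_one_add p 2 (by omega : 1 ≤ k)
      rwa [hT2, hp0 _ (by omega) (by omega), add_zero, add_zero, show (2 : ℤ) - 1 = 1 by norm_num,
        hp1] at this
    have hα3 : α ≤ 3 := by nlinarith
    rw [hrec 2 le_rfl, kPellRhs, hT2, hT3, sub_self, zpow_zero, show (2 : ℤ) - 1 = 1 by norm_num,
      hp1]
    constructor <;> linarith
  | succ n hn ih =>
    intro hnk
    obtain ⟨hpn, hT⟩ := ih (by omega)
    have hpos : 0 ≤ α ^ (n - 2) := zpow_nonneg (by positivity) _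
    have hpow : α ^ (n + 1 - 2) = α * α ^ (n - 2) := by
      rw [show n + 1 - 2 = (n - 2) + 1 by ring, zpow_add_one₀ (by positivity), mul_comm]
    have hshift := kPellTail_add_one_add p (n + 1) (by omega : 1 ≤ k)
    rw [hp0 _ (by omega) (by omega), add_sub_cancel_right, add_zero] at hshift
    rw [hpow, hshift, hrec (n + 1) (by omega), kPellRhs, add_sub_cancel_right]
    exact ⟨by linarith, by nlinarith [mul_le_mul_of_nonneg_right hquad hpos]⟩

/-- For all k ≥ 2 and n ≥ 1, α^{n-2} ≤ P_n^{(k)} ≤ α^{n-1}. -/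
theorem kPell_pow_bounds (k : ℕ) (hk : 2 ≤ k) (P : ℤ → ℤ)
    (hP0 : ∀ n : ℤ, 2 - (k : ℤ) ≤ n → n ≤ 0 → P n = 0)
    (hP1 : P 1 = 1)
    (hPrec : ∀ n : ℤ, 2 ≤ n → P n = 2 * P (n - 1) + ∑ i ∈ Finset.Icc (2 : ℕ) k, P (n - i))
    (α : ℝ) (hα1 : 1 < α)
    (hroot : α ^ k - 2 * α ^ (k - 1) - ∑ i ∈ Finset.range (k - 1), α ^ i = 0) :
    ∀ n : ℕ, 1 ≤ n →
      α ^ ((n : ℤ) - 2) ≤ (P (n : ℤ) : ℝ) ∧ (P (n : ℤ) : ℝ) ≤ α ^ ((n : ℤ) - 1) := by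
  have hk1 : 1 ≤ k := by omega
  have hp0 : ∀ n : ℤ, 2 - k ≤ n → n ≤ 0 → (P n : ℝ) = 0 := fun n h₁ h₂ => by simp [hP0 n h₁ h₂]
  have hp1 : (P 1 : ℝ) = 1 := by simp [hP1]
  have hrec : ∀ n : ℤ, 2 ≤ n → (P n : ℝ) = kPellRhs k (fun m => (P m : ℝ)) n := fun n hn => by
    simp [kPellRhs, kPellTail, hPrec n hn]
  have hzpow := kPellRhs_zpow_sub (by positivity) hk1 hroot
  have lower : ∀ n : ℤ, 1 ≤ n → α ^ (n - 2) ≤ P n := by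
    refine le_of_kPellRhs_of_initial_le hk1 1 (fun n _ => (hzpow 2 n).ge)
      (fun n _ => (hrec n (by omega)).ge) fun n hn1 hnk => ?_
    rcases hn1.eq_or_lt with rfl | hn2
    · rw [hp1]
      exact zpow_le_one_of_nonpos₀ hα1.le (by norm_num)
    · exact (zpow_sub_two_le_and_kPellTail hα1.le
        (sq_le_three_mul_sub_one_of_kPell_root (by positivity) hk1 hroot) hp0 hp1 hrec n hn2
        (by omega)).1
  have upper : ∀ n : ℤ, 2 - k ≤ n → (P n : ℝ) ≤ α ^ (n - 1) := by
    refine le_of_kPellRhs_of_initial_le hk1 (2 - k) (fun n _ => (hrec n (by omega)).le)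
      (fun n _ => (hzpow 1 n).le) fun n hn hnk => ?_
    rcases (show n ≤ 0 ∨ n = 1 by omega) with hn0 | rfl
    · rw [hp0 n hn hn0]
      positivity
    · simp [hp1]
  exact fun n hn => ⟨lower n (by omega), upper n (by omega)⟩
end

section
/- Let k ≥ 2 and let α be the unique real root greater than 1 of x^k - 2x^{k-1} - ... - x - 1. Define f_k(x) = (x-1)/((k+1)x² - 3kx + k - 1). Then 0.276 < f_k(α) < 0.5. -/
/-!
Multiplying the root equation by `α - 1` telescopes the geometric sum and leaves
`α ^ (k - 1) * (α ^ 2 - 3 * α + 1) = -1`. Hence `α ^ 2 - 3 * α + 1 < 0`, so `α < φ ^ 2 < 2.619`,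
and `α > 2` because `α ^ 2 - 3 * α + 1 ≤ -1` on `[1, 2]`. By Bernoulli, `k < α ^ (k - 1)`, so
`k * (α ^ 2 - 3 * α + 1) = -k / α ^ (k - 1)` lies in `(-1, 0)`. The denominator of `f_k(α)` is
`α ^ 2 - 1 + k * (α ^ 2 - 3 * α + 1)`, which therefore lies in `(α ^ 2 - 2, α ^ 2 - 1)`, and so
`1 / (α + 1) < f_k(α) < (α - 1) / (α ^ 2 - 2) < 1 / 2`.
-/

namespace KPell

variable {α : ℝ} {m : ℕ}

lemma pow_mul_quadratic_eq_neg_one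
    (hroot : α ^ (m + 1) - 2 * α ^ m - ∑ i ∈ Finset.range m, α ^ i = 0) :
    α ^ m * (α ^ 2 - 3 * α + 1) = -1 := by
  linear_combination (α - 1) * hroot + geom_sum_mul α m

lemma quadratic_neg_of_pow_mul_eq_neg_one (hα : 0 < α) (h : α ^ m * (α ^ 2 - 3 * α + 1) = -1) :
    α ^ 2 - 3 * α + 1 < 0 :=
  neg_of_mul_neg_right (h ▸ neg_one_lt_zero) (pow_pos hα m).le

lemma lt_of_quadratic_neg (h : α ^ 2 - 3 * α + 1 < 0) : α < 2.619 := by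
  nlinarith

lemma two_lt_of_pow_mul_quadratic_eq_neg_one (hα : 1 < α) (hm : m ≠ 0)
    (h : α ^ m * (α ^ 2 - 3 * α + 1) = -1) : 2 < α := by
  by_contra! hα2
  have hq : α ^ 2 - 3 * α + 1 ≤ -1 := by nlinarith
  have hpow : 1 < α ^ m := one_lt_pow₀ hα hm
  nlinarith

lemma natCast_add_one_lt_pow (hα : 2 < α) (hm : m ≠ 0) : (m : ℝ) + 1 < α ^ m := by
  have hbernoulli := one_add_mul_sub_le_pow (by linarith : (-1 : ℝ) ≤ α) m
  have hm' : (0 : ℝ) < m := by positivity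
  nlinarith

lemma neg_one_lt_mul_quadratic (hα : 2 < α) (hm : m ≠ 0)
    (h : α ^ m * (α ^ 2 - 3 * α + 1) = -1) : -1 < ((m : ℝ) + 1) * (α ^ 2 - 3 * α + 1) := by
  have hpow : 0 < α ^ m := by positivity
  refine lt_of_mul_lt_mul_left ?_ hpow.le
  linear_combination natCast_add_one_lt_pow hα hm - ((m : ℝ) + 1) * h

lemma inv_add_one_lt_div_and_div_lt_half (hα : 2 < α) {c : ℝ} (hc₁ : -1 < c) (hc₀ : c < 0) :
    1 / (α + 1) < (α - 1) / (α ^ 2 - 1 + c) ∧ (α - 1) / (α ^ 2 - 1 + c) < 1 / 2 := by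
  have hD : 0 < α ^ 2 - 1 + c := by nlinarith
  constructor
  · rw [div_lt_div_iff₀ (by linarith) hD]
    nlinarith
  · rw [div_lt_div_iff₀ hD (by norm_num)]
    nlinarith

end KPell

open KPell in
/-- 0.276 < f_k(α) < 0.5 where f_k(x) = (x-1)/((k+1)x² - 3kx + k - 1). -/
theorem kPell_fk_bounds (k : ℕ) (hk : 2 ≤ k) (α : ℝ) (hα1 : 1 < α)
    (hroot : α ^ k - 2 * α ^ (k - 1) - ∑ i ∈ Finset.range (k - 1), α ^ i = 0) :
    0.276 < (α - 1) / (((k : ℝ) + 1) * α ^ 2 - 3 * k * α + k - 1) ∧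
      (α - 1) / (((k : ℝ) + 1) * α ^ 2 - 3 * k * α + k - 1) < 0.5 := by
  obtain ⟨m, rfl⟩ : ∃ m, k = m + 1 := ⟨k - 1, by omega⟩
  have hm : m ≠ 0 := by omega
  rw [Nat.add_sub_cancel] at hroot
  have hid := pow_mul_quadratic_eq_neg_one hroot
  have hq := quadratic_neg_of_pow_mul_eq_neg_one (by linarith) hid
  have hα2 := two_lt_of_pow_mul_quadratic_eq_neg_one hα1 hm hid
  have hαlt := lt_of_quadratic_neg hq
  have hkq := neg_one_lt_mul_quadratic hα2 hm hid
  have hden : (((m + 1 : ℕ) : ℝ) + 1) * α ^ 2 - 3 * (m + 1 : ℕ) * α + (m + 1 : ℕ) - 1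
      = α ^ 2 - 1 + ((m : ℝ) + 1) * (α ^ 2 - 3 * α + 1) := by
    push_cast
    ring
  have hkq_neg : ((m : ℝ) + 1) * (α ^ 2 - 3 * α + 1) < 0 :=
    mul_neg_of_pos_of_neg (by positivity) hq
  rw [hden]
  obtain ⟨hlo, hhi⟩ := inv_add_one_lt_div_and_div_lt_half hα2 hkq hkq_neg
  have hinv : (0.276 : ℝ) < 1 / (α + 1) := by
    rw [lt_div_iff₀ (by linarith)]
    linarith
  exact ⟨hinv.trans hlo, by linarith⟩
end

section
/- For all k ≥ 2 and n ≥ 2-k, |P_n^{(k)} - f_k(α)·α^n| < 1/2, where α is the dominant root of the characteristic polynomial and f_k(x) = (x-1)/((k+1)x² - 3kx + k - 1). -/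
/-!
Let `ψ(x) = x^k - 2x^{k-1} - x^{k-2} - ⋯ - 1`. Then `(x - 1)ψ(x) = x^{k+1} - 3x^k + x^{k-1} + 1`,
so `ψ(α) = 0` gives `α^{k-1}(α² - 3α + 1) = -1`, hence `α < 3`; and `2 < α` since
`α^{k-1}(α - 2) = 1 + α + ⋯ + α^{k-2}`. Dividing, `(x - 1)ψ(x) = (x - α) Q(x)` with
`Q(x) = x^k - (3 - α)x^{k-1} - ∑_{j=1}^{k-1} α^{-j} x^{j-1}`,
whose coefficients after the leading one are negative and, as `Q(1) = 0`, sum to `-1`.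

The error `E_n = P_n - f_k(α) α^n` satisfies the Pell recurrence, so its `Q`-residual `R_n`
satisfies `R_{n+1} = α R_n` for `n ≥ 2`; the constant `f_k(α)` is precisely the one making
`R_2 = 0`. Hence `E_n` is a convex combination of `E_{n-1}, …, E_{n-k}` for `n ≥ 2`, and the
bound `|E_n| < 1/2`, checked by hand for `2 - k ≤ n ≤ 1`, propagates to all `n`.
-/

open Finset

lemma sum_Icc_two_sub_eq_sum_range {M : Type*} [AddCommMonoid M] (k : ℕ) (f : ℤ → M) (n : ℤ) :
    ∑ i ∈ Icc 2 k, f (n - i) = ∑ m ∈ range (k - 1), f (n - k + m) := by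
  refine sum_nbij' (fun i => k - i) (fun m => k - m) ?_ ?_ ?_ ?_ ?_ <;> intro i hi <;>
    simp only [mem_Icc, mem_range] at hi ⊢
  all_goals first | omega | congr 1; omega

lemma abs_mul_add_sum_mul_lt {ι : Type*} {s : Finset ι} {a x B : ℝ} {w y : ι → ℝ} (ha : 0 < a)
    (hw : ∀ i ∈ s, 0 ≤ w i) (hsum : a + ∑ i ∈ s, w i = 1) (hx : |x| < B)
    (hy : ∀ i ∈ s, |y i| ≤ B) : |a * x + ∑ i ∈ s, w i * y i| < B :=
  calc |a * x + ∑ i ∈ s, w i * y i| ≤ a * |x| + ∑ i ∈ s, w i * |y i| := by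
        refine (abs_add_le _ _).trans (add_le_add (by rw [abs_mul, abs_of_pos ha]) ?_)
        refine (abs_sum_le_sum_abs _ _).trans (sum_le_sum fun i hi => ?_)
        rw [abs_mul, abs_of_nonneg (hw i hi)]
    _ < a * B + ∑ i ∈ s, w i * B :=
        add_lt_add_of_lt_of_le (by gcongr) <|
          sum_le_sum fun i hi => mul_le_mul_of_nonneg_left (hy i hi) (hw i hi)
    _ = B := by rw [← sum_mul, ← add_mul, hsum, one_mul]

lemma abs_lt_of_convex_rec {k : ℕ} {u : ℤ → ℝ} {w : ℕ → ℝ} {a B : ℝ} {n₀ : ℤ} (hk : 1 ≤ k)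
    (ha : 0 < a) (hw : ∀ m ∈ range (k - 1), 0 ≤ w m) (hsum : a + ∑ m ∈ range (k - 1), w m = 1)
    (hrec : ∀ n, n₀ + k ≤ n → u n = a * u (n - 1) + ∑ m ∈ range (k - 1), w m * u (n - k + m))
    (hbase : ∀ n, n₀ ≤ n → n < n₀ + k → |u n| < B) : ∀ n, n₀ ≤ n → |u n| < B := by
  intro n
  induction n using Int.strongRec (m := n₀) with
  | lt n hn => intro h; omega
  | ge n hn ih =>
    intro _
    rcases lt_or_ge n (n₀ + k) with h | h
    · exact hbase n hn h
    · rw [hrec n h]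
      exact abs_mul_add_sum_mul_lt ha hw hsum (ih _ (by omega) (by omega))
        fun m hm => (ih _ (by rw [mem_range] at hm; omega) (by omega)).le

noncomputable section

namespace KPell

variable {k : ℕ} {α : ℝ}

lemma pow_pred_mul_eq_neg_one (hk : 1 ≤ k)
    (hroot : α ^ k - 2 * α ^ (k - 1) - ∑ i ∈ range (k - 1), α ^ i = 0) :
    α ^ (k - 1) * (α ^ 2 - 3 * α + 1) = -1 := by
  obtain ⟨K, rfl⟩ := Nat.exists_eq_add_of_le' hk
  simp only [Nat.add_sub_cancel] at hroot ⊢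
  linear_combination (α - 1) * hroot + geom_sum_mul α K

lemma inv_pow_pred_eq (hk : 1 ≤ k)
    (hroot : α ^ k - 2 * α ^ (k - 1) - ∑ i ∈ range (k - 1), α ^ i = 0) :
    α⁻¹ ^ (k - 1) = 3 * α - α ^ 2 - 1 := by
  rw [inv_pow]
  apply inv_eq_of_mul_eq_one_right
  linear_combination -pow_pred_mul_eq_neg_one hk hroot

lemma two_lt_of_root (hk : 2 ≤ k) (hα : 0 < α)
    (hroot : α ^ k - 2 * α ^ (k - 1) - ∑ i ∈ range (k - 1), α ^ i = 0) : 2 < α := by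
  have hsum : 1 ≤ ∑ i ∈ range (k - 1), α ^ i := by
    simpa using single_le_sum (f := (α ^ ·)) (fun i _ => by positivity)
      (mem_range.2 (by omega : 0 < k - 1))
  have hpow : α ^ k = α ^ (k - 1) * α := by rw [← pow_succ, Nat.sub_add_cancel (by omega)]
  by_contra! h
  nlinarith [pow_pos hα (k - 1)]

lemma sq_sub_three_mul_add_one_neg (hα : 0 < α)
    (hquad : α ^ (k - 1) * (α ^ 2 - 3 * α + 1) = -1) : α ^ 2 - 3 * α + 1 < 0 := by
  nlinarith [pow_pos hα (k - 1)]

lemma lt_three_of_pow_pred_mul_eq_neg_one (hα : 0 < α)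
    (hquad : α ^ (k - 1) * (α ^ 2 - 3 * α + 1) = -1) : α < 3 := by
  nlinarith [sq_sub_three_mul_add_one_neg hα hquad]

def PellRecAt (k : ℕ) (u : ℤ → ℝ) (n : ℤ) : Prop :=
  u n = 2 * u (n - 1) + ∑ m ∈ range (k - 1), u (n - k + m)

lemma PellRecAt.sub_const_mul {u v : ℤ → ℝ} {n : ℤ} (hu : PellRecAt k u n) (hv : PellRecAt k v n)
    (c : ℝ) : PellRecAt k (fun n => u n - c * v n) n := by
  unfold PellRecAt at *
  rw [sum_sub_distrib, ← mul_sum]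
  linear_combination hu - c * hv

lemma PellRecAt.four_term {u : ℤ → ℝ} {n : ℤ} (hk : 1 ≤ k) (h₀ : PellRecAt k u n)
    (h₁ : PellRecAt k u (n + 1)) : u (n + 1) = 3 * u n - u (n - 1) - u (n - k) := by
  have tele : ∑ m ∈ range (k - 1), u (n + 1 - k + m) - ∑ m ∈ range (k - 1), u (n - k + m) =
      u (n - 1) - u (n - k) := by
    rw [← sum_sub_distrib]
    convert sum_range_sub (fun m : ℕ => u (n - k + m)) (k - 1) using 3 <;> push_cast
    · ring_nf
    · omega
    · ring
  unfold PellRecAt at h₀ h₁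
  rw [add_sub_cancel_right] at h₁
  linarith

lemma pellRecAt_zpow (hα : α ≠ 0) (hk : 1 ≤ k)
    (hroot : α ^ k - 2 * α ^ (k - 1) - ∑ i ∈ range (k - 1), α ^ i = 0) (n : ℤ) :
    PellRecAt k (α ^ ·) n := by
  have shift (j : ℕ) : α ^ (n - k + j) = α ^ (n - k) * α ^ j := by
    rw [zpow_add₀ hα, zpow_natCast]
  have h₀ : α ^ n = α ^ (n - k) * α ^ k := by rw [← shift, sub_add_cancel]
  have h₁ : α ^ (n - 1) = α ^ (n - k) * α ^ (k - 1) := by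
    rw [← shift, show n - k + ((k - 1 : ℕ) : ℤ) = n - 1 by omega]
  unfold PellRecAt
  simp only [shift]
  rw [← mul_sum, h₀, h₁]
  linear_combination α ^ (n - k) * hroot

def geomTail (k : ℕ) (α : ℝ) (u : ℤ → ℝ) (n : ℤ) : ℝ :=
  ∑ m ∈ range (k - 1), α⁻¹ ^ (m + 1) * u (n - k + m)

/-- The polynomial `Q(x) = (x - 1)ψ(x) / (x - α)` applied to `u` at `n`, reading `x^j` as
`u (n - k + j)`. -/
def reducedResidual (k : ℕ) (α : ℝ) (u : ℤ → ℝ) (n : ℤ) : ℝ :=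
  u n - (3 - α) * u (n - 1) - geomTail k α u n

lemma reducedResidual_eq_zero_iff {u : ℤ → ℝ} {n : ℤ} :
    reducedResidual k α u n = 0 ↔ u n = (3 - α) * u (n - 1) + geomTail k α u n := by
  rw [reducedResidual]
  constructor <;> intro h <;> linarith

lemma reducedResidual_sub_const_mul (u v : ℤ → ℝ) (c : ℝ) (n : ℤ) :
    reducedResidual k α (fun n => u n - c * v n) n =
      reducedResidual k α u n - c * reducedResidual k α v n := by
  simp only [reducedResidual, geomTail, mul_sub, sum_sub_distrib, mul_sum, mul_left_comm c]
  ring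

lemma geomTail_succ (hα : α ≠ 0) (hk : 1 ≤ k) (u : ℤ → ℝ) (n : ℤ) :
    geomTail k α u (n + 1) = α * geomTail k α u n - u (n - k) + α⁻¹ ^ (k - 1) * u (n - 1) := by
  have tele : geomTail k α u (n + 1) - α * geomTail k α u n =
      α⁻¹ ^ (k - 1) * u (n - 1) - u (n - k) := by
    rw [geomTail, geomTail, mul_sum, ← sum_sub_distrib]
    convert sum_range_sub (fun m : ℕ => α⁻¹ ^ m * u (n - k + m)) (k - 1) using 2 with m <;>
      push_cast
    · rw [show n + 1 - k + m = n - k + (m + 1) by ring, pow_succ']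
      field_simp
    · rw [show n - k + ((k - 1 : ℕ) : ℤ) = n - 1 by omega]
    · simp
  linarith

lemma reducedResidual_succ_sub (hα : α ≠ 0) (hk : 1 ≤ k)
    (hinv : α⁻¹ ^ (k - 1) = 3 * α - α ^ 2 - 1) (u : ℤ → ℝ) (n : ℤ) :
    reducedResidual k α u (n + 1) - α * reducedResidual k α u n =
      u (n + 1) - 3 * u n + u (n - 1) + u (n - k) := by
  rw [reducedResidual, reducedResidual, geomTail_succ hα hk, hinv, add_sub_cancel_right]
  ring

lemma reducedResidual_succ {u : ℤ → ℝ} {n : ℤ} (hα : α ≠ 0) (hk : 1 ≤ k)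
    (hinv : α⁻¹ ^ (k - 1) = 3 * α - α ^ 2 - 1) (h₀ : PellRecAt k u n)
    (h₁ : PellRecAt k u (n + 1)) : reducedResidual k α u (n + 1) = α * reducedResidual k α u n := by
  linarith [reducedResidual_succ_sub hα hk hinv u n, h₀.four_term hk h₁]

lemma three_sub_add_sum_inv_pow (hα : 1 < α) (hk : 1 ≤ k)
    (hinv : α⁻¹ ^ (k - 1) = 3 * α - α ^ 2 - 1) :
    3 - α + ∑ m ∈ range (k - 1), α⁻¹ ^ (m + 1) = 1 := by
  -- `1` solves the four-term recurrence, so its constant residual is fixed by `· * α`, `α ≠ 1`.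
  have h := reducedResidual_succ_sub (by positivity) hk hinv (fun _ => 1) 0
  simp only [reducedResidual, geomTail, mul_one] at h
  have h' : (α - 1) * (3 - α + ∑ m ∈ range (k - 1), α⁻¹ ^ (m + 1) - 1) = 0 := by
    linear_combination h
  rcases mul_eq_zero.1 h' with h | h <;> linarith

def binetDenom (k : ℕ) (α : ℝ) : ℝ := ((k : ℝ) + 1) * α ^ 2 - 3 * k * α + k - 1

def binetCoeff (k : ℕ) (α : ℝ) : ℝ := (α - 1) / binetDenom k α

lemma reducedResidual_two_of_initial {u : ℤ → ℝ} (hk : 1 ≤ k)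
    (hu0 : ∀ n : ℤ, 2 - (k : ℤ) ≤ n → n ≤ 0 → u n = 0) (hu1 : u 1 = 1) (h₂ : PellRecAt k u 2) :
    reducedResidual k α u 2 = α - 1 := by
  have hzero : ∀ m ∈ range (k - 1), u (2 - k + m) = 0 := fun m hm =>
    hu0 _ (by omega) (by rw [mem_range] at hm; omega)
  rw [PellRecAt, sum_eq_zero hzero] at h₂
  rw [reducedResidual, geomTail, sum_eq_zero fun m hm => by rw [hzero m hm, mul_zero]]
  norm_num [h₂, hu1]
  ring

lemma reducedResidual_zpow_two (hk : 1 ≤ k) (hinv : α⁻¹ ^ (k - 1) = 3 * α - α ^ 2 - 1) :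
    reducedResidual k α (α ^ ·) 2 = binetDenom k α := by
  have hterm : ∀ m ∈ range (k - 1), α⁻¹ ^ (m + 1) * α ^ ((2 : ℤ) - k + m) = α⁻¹ ^ (k - 1) := by
    intro m hm
    rw [mem_range] at hm
    rw [show (2 : ℤ) - k + m = -((k - 2 - m : ℕ) : ℤ) by omega, zpow_neg, zpow_natCast, ← inv_pow,
      ← pow_add, show m + 1 + (k - 2 - m) = k - 1 by omega]
  simp only [reducedResidual, geomTail]
  rw [sum_congr rfl hterm, sum_const, card_range, nsmul_eq_mul, hinv, Nat.cast_sub hk, binetDenom]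
  norm_num
  ring

lemma two_mul_sub_one_lt_binetDenom (hk : 1 ≤ k) (hα : 2 < α)
    (hquad : α ^ (k - 1) * (α ^ 2 - 3 * α + 1) = -1) : 2 * (α - 1) < binetDenom k α := by
  have hY : 0 < α ^ (k - 1) := by positivity
  have hkY : (k : ℝ) ≤ α ^ (k - 1) :=
    calc (k : ℝ) ≤ (2 : ℝ) ^ (k - 1) := by
          have := Nat.lt_two_pow_self (n := k - 1)
          exact_mod_cast (show k ≤ 2 ^ (k - 1) by omega)
      _ ≤ α ^ (k - 1) := pow_le_pow_left₀ (by norm_num) hα.le _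
  have hmul : (binetDenom k α - 2 * (α - 1)) * α ^ (k - 1) = (α - 1) ^ 2 * α ^ (k - 1) - k := by
    unfold binetDenom
    linear_combination (k : ℝ) * hquad
  have : (k : ℝ) < (α - 1) ^ 2 * α ^ (k - 1) := by
    nlinarith [mul_lt_mul_of_pos_right (show 1 < (α - 1) ^ 2 by nlinarith) hY]
  nlinarith

lemma binetDenom_lt (hk : 1 ≤ k) (hα : 0 < α) (hquad : α ^ (k - 1) * (α ^ 2 - 3 * α + 1) = -1) :
    binetDenom k α < α ^ 2 - 1 := by
  have hq := sq_sub_three_mul_add_one_neg hα hquad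
  have hk' : (1 : ℝ) ≤ k := by exact_mod_cast hk
  unfold binetDenom
  nlinarith

lemma reducedResidual_error_eq_zero {u : ℤ → ℝ} (hk : 1 ≤ k) (hα : 2 < α)
    (hroot : α ^ k - 2 * α ^ (k - 1) - ∑ i ∈ range (k - 1), α ^ i = 0)
    (hu0 : ∀ n : ℤ, 2 - (k : ℤ) ≤ n → n ≤ 0 → u n = 0) (hu1 : u 1 = 1)
    (hrec : ∀ n, 2 ≤ n → PellRecAt k u n) :
    ∀ n, 2 ≤ n → reducedResidual k α (fun n => u n - binetCoeff k α * α ^ n) n = 0 := by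
  have hα0 : α ≠ 0 := by positivity
  have hinv := inv_pow_pred_eq hk hroot
  have hD : binetDenom k α ≠ 0 :=
    (by linarith [two_mul_sub_one_lt_binetDenom hk hα (pow_pred_mul_eq_neg_one hk hroot)] :
      0 < binetDenom k α).ne'
  have hE (n : ℤ) (hn : 2 ≤ n) : PellRecAt k (fun n => u n - binetCoeff k α * α ^ n) n :=
    (hrec n hn).sub_const_mul (pellRecAt_zpow hα0 hk hroot n) _
  refine Int.leInduction ?_ fun n hn ih => by
    rw [reducedResidual_succ hα0 hk hinv (hE n hn) (hE (n + 1) (by omega)), ih, mul_zero]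
  rw [reducedResidual_sub_const_mul, reducedResidual_two_of_initial hk hu0 hu1 (hrec 2 le_rfl),
    reducedResidual_zpow_two hk hinv, binetCoeff, div_mul_cancel₀ _ hD, sub_self]

lemma abs_error_lt_of_le_one {u : ℤ → ℝ} (hk : 1 ≤ k) (hα : 2 < α)
    (hquad : α ^ (k - 1) * (α ^ 2 - 3 * α + 1) = -1)
    (hu0 : ∀ n : ℤ, 2 - (k : ℤ) ≤ n → n ≤ 0 → u n = 0) (hu1 : u 1 = 1) {n : ℤ}
    (hn₀ : 2 - (k : ℤ) ≤ n) (hn₁ : n ≤ 1) : |u n - binetCoeff k α * α ^ n| < 1 / 2 := by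
  have hlo := two_mul_sub_one_lt_binetDenom hk hα hquad
  have hhi := binetDenom_lt hk (by linarith) hquad
  have hα3 := lt_three_of_pow_pred_mul_eq_neg_one (by linarith) hquad
  have hD : 0 < binetDenom k α := by linarith
  have hg : binetCoeff k α < 1 / 2 := by rw [binetCoeff, div_lt_iff₀ hD]; linarith
  have hg0 : 0 < binetCoeff k α := div_pos (by linarith) hD
  rcases le_or_gt n 0 with h | h
  · rw [hu0 n hn₀ h, zero_sub, abs_neg, abs_of_pos (by positivity)]
    calc binetCoeff k α * α ^ n ≤ binetCoeff k α * 1 :=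
          mul_le_mul_of_nonneg_left (zpow_le_one_of_nonpos₀ (by linarith) h) hg0.le
      _ < 1 / 2 := by rwa [mul_one]
  · obtain rfl : n = 1 := by omega
    rw [hu1, zpow_one, abs_lt]
    refine ⟨by nlinarith, ?_⟩
    rw [binetCoeff, div_mul_eq_mul_div, sub_lt_comm, lt_div_iff₀ hD]
    nlinarith

end KPell

end

open KPell in
/-- For all k ≥ 2 and n ≥ 2-k, |P_n^{(k)} - f_k(α)·α^n| < 1/2. -/
theorem kPell_binet_error (k : ℕ) (hk : 2 ≤ k) (P : ℤ → ℤ)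
    (hP0 : ∀ n : ℤ, 2 - (k : ℤ) ≤ n → n ≤ 0 → P n = 0)
    (hP1 : P 1 = 1)
    (hPrec : ∀ n : ℤ, 2 ≤ n → P n = 2 * P (n - 1) + ∑ i ∈ Finset.Icc (2 : ℕ) k, P (n - i))
    (α : ℝ) (hα1 : 1 < α)
    (hroot : α ^ k - 2 * α ^ (k - 1) - ∑ i ∈ Finset.range (k - 1), α ^ i = 0) :
    ∀ n : ℤ, 2 - (k : ℤ) ≤ n →
      |(P n : ℝ) - (α - 1) / (((k : ℝ) + 1) * α ^ 2 - 3 * k * α + k - 1) * α ^ n| < 1 / 2 := by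
  have hk1 : 1 ≤ k := by omega
  have hα2 := two_lt_of_root hk (by positivity) hroot
  have hinv := inv_pow_pred_eq hk1 hroot
  have hquad := pow_pred_mul_eq_neg_one hk1 hroot
  have hP0' (n : ℤ) (h₀ : 2 - (k : ℤ) ≤ n) (h₁ : n ≤ 0) : (P n : ℝ) = 0 := by simp [hP0 n h₀ h₁]
  have hP1' : (P 1 : ℝ) = 1 := by simp [hP1]
  have hPrec' (n : ℤ) (hn : 2 ≤ n) : PellRecAt k (fun n => (P n : ℝ)) n := by
    have := hPrec n hn
    rw [sum_Icc_two_sub_eq_sum_range] at this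
    simp only [PellRecAt]
    exact_mod_cast this
  have hres := reducedResidual_error_eq_zero hk1 hα2 hroot hP0' hP1' hPrec'
  exact abs_lt_of_convex_rec (n₀ := 2 - k) hk1 (u := fun n => (P n : ℝ) - binetCoeff k α * α ^ n)
    (by linarith [lt_three_of_pow_pred_mul_eq_neg_one (by positivity) hquad])
    (fun m _ => by positivity) (three_sub_add_sum_inv_pow hα1 hk1 hinv)
    (fun n hn => reducedResidual_eq_zero_iff.1 (hres n (by omega)))
    fun n hn₀ hn₁ => abs_error_lt_of_le_one hk1 hα2 hquad hP0' hP1' hn₀ (by omega)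
end

section
/- Let k ≥ 2 and α the dominant root of the k-Pell characteristic polynomial. Then |f_k(α) - (5-√5)/10| < k/φ^{k-2}, where f_k(x) = (x-1)/((k+1)x² - 3kx + k - 1). -/
/-!
Multiplying the characteristic equation by `α - 1` gives `α ^ (k - 1) * (3α - α² - 1) = 1`, and
`3x - x² - 1 = (φ² - x)(x - ψ²)`, so `α` lies just below `φ²`, at distance about `α ^ (1 - k)`.
Since `f_k(φ²) = 1 / (φ² + 1)`, the difference `f_k(α) - f_k(φ²)` has the explicit form
`((φ² - α)(α - 1) + k (3α - α² - 1)) / (D(α) (φ² + 1))` with `D` the denominator of `f_k`;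
its numerator is at most `(k + 1) α ^ (1 - k)`, its denominator exceeds `6` because
`k ≤ α ^ (k - 1)` for `α > 2`, and `α ^ (k - 1) ≥ 2 φ ^ (k - 2)`.
-/

open Finset Real
open scoped goldenRatio

theorem two_lt_of_kPell_root {R : Type*} [CommRing R] [LinearOrder R] [IsStrictOrderedRing R]
    {x : R} {n : ℕ} (hx : 0 ≤ x) (hn : n ≠ 0)
    (h : x ^ (n + 1) - 2 * x ^ n - ∑ i ∈ range n, x ^ i = 0) : 2 < x := by
  have hsum : 1 ≤ ∑ i ∈ range n, x ^ i := by
    simpa using single_le_sum (fun i _ => pow_nonneg hx i) (mem_range.2 (Nat.pos_of_ne_zero hn))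
  have hfac : x ^ n * (x - 2) = ∑ i ∈ range n, x ^ i := by linear_combination h
  linarith [pos_of_mul_pos_right (hfac ▸ hsum.trans_lt' one_pos) (pow_nonneg hx n)]

theorem kPell_root_mul_eq_one {R : Type*} [CommRing R] {x : R} {n : ℕ}
    (h : x ^ (n + 1) - 2 * x ^ n - ∑ i ∈ range n, x ^ i = 0) :
    x ^ n * (3 * x - x ^ 2 - 1) = 1 := by
  linear_combination (1 - x) * h - geom_sum_mul x n

theorem natCast_add_one_le_pow {R : Type*} [CommSemiring R] [PartialOrder R]
    [IsOrderedRing R] {x : R} (hx : 2 ≤ x) (n : ℕ) : (n : R) + 1 ≤ x ^ n := by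
  have h2n : ((n + 1 : ℕ) : R) ≤ (2 ^ n : ℕ) := Nat.mono_cast n.lt_two_pow_self
  push_cast at h2n
  exact h2n.trans (pow_le_pow_left₀ zero_le_two hx n)

theorem three_mul_sub_sq_sub_one_eq (x : ℝ) :
    3 * x - x ^ 2 - 1 = (φ ^ 2 - x) * (x - ψ ^ 2) := by
  rw [goldenRatio_sq, goldenConj_sq]
  linear_combination (-1 / 4 : ℝ) * sq_sqrt (show (0 : ℝ) ≤ 5 by norm_num)

theorem goldenRatio_sq_add_one_inv : (φ ^ 2 + 1)⁻¹ = (5 - √5) / 10 := by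
  have hsq : φ ^ 2 + 1 = (5 + √5) / 2 := by rw [goldenRatio_sq]; ring
  rw [hsq, inv_div, div_eq_div_iff (by positivity) (by norm_num)]
  linear_combination sq_sqrt (show (0 : ℝ) ≤ 5 by norm_num)

theorem kPell_f_sub_inv_eq {K : Type*} [Field K] {k x b : K}
    (hD : (k + 1) * x ^ 2 - 3 * k * x + k - 1 ≠ 0) (hb : b + 1 ≠ 0) :
    (x - 1) / ((k + 1) * x ^ 2 - 3 * k * x + k - 1) - (b + 1)⁻¹ =
      ((b - x) * (x - 1) + k * (3 * x - x ^ 2 - 1)) /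
        (((k + 1) * x ^ 2 - 3 * k * x + k - 1) * (b + 1)) := by
  rw [inv_eq_one_div, div_sub_div _ _ hD hb]
  ring

theorem kPell_numerator_pos_le {k x : ℝ} (hk : 0 ≤ k) (hx : 1 < x)
    (he : 0 < 3 * x - x ^ 2 - 1) :
    0 < (φ ^ 2 - x) * (x - 1) + k * (3 * x - x ^ 2 - 1) ∧
      (φ ^ 2 - x) * (x - 1) + k * (3 * x - x ^ 2 - 1) ≤ (k + 1) * (3 * x - x ^ 2 - 1) := by
  have hψ : ψ ^ 2 < 1 := by linarith [goldenConj_sq, goldenConj_neg]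
  rw [three_mul_sub_sq_sub_one_eq] at he ⊢
  have hδ : 0 < φ ^ 2 - x := pos_of_mul_pos_left he (by linarith)
  constructor
  · positivity
  · nlinarith

theorem two_lt_kPell_denom {k x : ℝ} (hx : 2 < x) (hke : k * (3 * x - x ^ 2 - 1) ≤ 1) :
    2 < (k + 1) * x ^ 2 - 3 * k * x + k - 1 := by
  nlinarith

/-- |f_k(α) - (5-√5)/10| < k/φ^{k-2}. -/
theorem kPell_fk_alpha_approx (k : ℕ) (hk : 2 ≤ k) (α : ℝ) (hα1 : 1 < α)
    (hroot : α ^ k - 2 * α ^ (k - 1) - ∑ i ∈ Finset.range (k - 1), α ^ i = 0) :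
    |(α - 1) / (((k : ℝ) + 1) * α ^ 2 - 3 * k * α + k - 1) - (5 - Real.sqrt 5) / 10| <
      (k : ℝ) / ((1 + Real.sqrt 5) / 2) ^ (k - 2) := by
  obtain ⟨m, rfl⟩ : ∃ m, k = m + 2 := ⟨k - 2, by omega⟩
  replace hroot : α ^ (m + 1 + 1) - 2 * α ^ (m + 1) - ∑ i ∈ range (m + 1), α ^ i = 0 := hroot
  have h2 : 2 < α := two_lt_of_kPell_root (by positivity) m.succ_ne_zero hroot
  have he : α ^ (m + 1) * (3 * α - α ^ 2 - 1) = 1 := kPell_root_mul_eq_one hroot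
  have hepos : 0 < 3 * α - α ^ 2 - 1 := pos_of_mul_pos_right (he ▸ one_pos) (by positivity)
  have hke : ((m : ℝ) + 2) * (3 * α - α ^ 2 - 1) ≤ 1 := by
    have hkA := natCast_add_one_le_pow h2.le (m + 1)
    push_cast at hkA
    nlinarith
  have hφA : 2 * φ ^ m ≤ α ^ (m + 1) := by
    rw [pow_succ, mul_comm]
    gcongr
    linarith [goldenRatio_lt_two]
  have hD := two_lt_kPell_denom h2 hke
  obtain ⟨hNpos, hNle⟩ := kPell_numerator_pos_le (k := (m : ℝ) + 2) (by positivity) hα1 hepos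
  have hc : 3 < φ ^ 2 + 1 := by linarith [goldenRatio_sq, one_lt_goldenRatio]
  push_cast
  rw [← goldenRatio_sq_add_one_inv, kPell_f_sub_inv_eq (by linarith) (by positivity),
    abs_of_pos (by positivity)]
  calc _ ≤ ((m + 2) + 1) * (3 * α - α ^ 2 - 1) / (2 * 3) := by gcongr
    _ < (m + 2) / φ ^ m := by
      rw [lt_div_iff₀ (by positivity)]
      nlinarith [mul_le_mul_of_nonneg_left hφA hepos.le]
end

section
/- For all integers k ≥ 2 and n ≥ 1, P_n^{(k)} ≤ F_{2n-1}, with equality if and only if n ≤ k+1, where F denotes the Fibonacci sequence. -/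
/-!
Let `d m = F_{2m+1} - P_{m+1}`. Telescoping the Pell recurrence gives
`P_n = 3 P_{n-1} - P_{n-2} - P_{n-1-k}`, and `F_{j+4} = 3 F_{j+2} - F_j`, so
`d (m+2) = 3 d (m+1) - d m + P_{m+2-k}` with `d 0 = d 1 = 0`. The forcing term `P_{m+2-k}` is
nonnegative, vanishes for `m < k - 1` and equals `P_1 = 1` at `m = k - 1`. Hence `d` is
nonnegative and nondecreasing, zero up to `m = k`, and at least `1` from `m = k + 1` on.
-/

open Finset

theorem sum_Icc_sub_sum_Icc_sub_one {G : Type*} [AddCommGroup G] (f : ℤ → G) (n : ℤ) {k : ℕ}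
    (hk : 1 ≤ k) :
    ∑ i ∈ Icc (2 : ℕ) k, f (n - i) - ∑ i ∈ Icc (2 : ℕ) k, f (n - 1 - i) =
      f (n - 2) - f (n - 1 - k) := by
  rw [← sum_sub_distrib, ← Finset.Ico_add_one_right_eq_Icc, sum_Ico_eq_sum_range]
  convert sum_range_sub' (fun j : ℕ => f (n - 2 - j)) (k + 1 - 2) using 2 with j
  · push_cast; ring_nf
  · push_cast; ring_nf
  · congr 1; omega

theorem Nat.fib_add_four_eq_three_mul_sub (m : ℕ) :
    (fib (m + 4) : ℤ) = 3 * fib (m + 2) - fib m := by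
  have h4 := fib_add_two (n := m + 2)
  have h3 := fib_add_two (n := m + 1)
  have h2 := fib_add_two (n := m)
  push_cast [h4, h3, h2]
  ring

section ThreeTermRecurrence

variable {d c : ℕ → ℤ} (h0 : d 0 = 0) (h1 : d 1 = 0)
  (hrec : ∀ m, d (m + 2) = 3 * d (m + 1) - d m + c m)
include h0 h1 hrec

-- The differences satisfy `Δ (m+1) = Δ m + d (m+1) + c m`, which keeps `d` and `Δ` nonnegative.
theorem nonneg_and_le_succ_of_rec (hc : ∀ m, 0 ≤ c m) : ∀ m, 0 ≤ d m ∧ d m ≤ d (m + 1)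
  | 0 => by simp [h0, h1]
  | m + 1 => by
    obtain ⟨hm, hle⟩ := nonneg_and_le_succ_of_rec hc m
    have := hc m
    constructor <;> linarith [hrec m]

theorem monotone_of_rec (hc : ∀ m, 0 ≤ c m) : Monotone d :=
  monotone_nat_of_le_succ fun m => (nonneg_and_le_succ_of_rec h0 h1 hrec hc m).2

theorem forcing_le_of_rec (hc : ∀ m, 0 ≤ c m) (m : ℕ) : c m ≤ d (m + 2) := by
  obtain ⟨hm, hle⟩ := nonneg_and_le_succ_of_rec h0 h1 hrec hc m
  obtain ⟨hm1, -⟩ := nonneg_and_le_succ_of_rec h0 h1 hrec hc (m + 1)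
  linarith [hrec m]

theorem eq_zero_of_rec {m : ℕ} (hc : ∀ j, j + 2 ≤ m → c j = 0) : d m = 0 := by
  induction m using Nat.strong_induction_on with
  | _ m ih =>
    match m with
    | 0 => exact h0
    | 1 => exact h1
    | m + 2 =>
      rw [hrec, ih m (by omega) (fun j hj => hc j (by omega)),
        ih (m + 1) (by omega) (fun j hj => hc j (by omega)), hc m le_rfl]
      norm_num

end ThreeTermRecurrence

structure IsKPell (k : ℕ) (P : ℤ → ℤ) : Prop where
  eq_zero : ∀ n : ℤ, 2 - (k : ℤ) ≤ n → n ≤ 0 → P n = 0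
  one : P 1 = 1
  recurrence : ∀ n : ℤ, 2 ≤ n → P n = 2 * P (n - 1) + ∑ i ∈ Icc (2 : ℕ) k, P (n - i)

-- Indexed by `m = n - 1`, so that `F_{2n-1}` is `fib (2 * m + 1)` without truncated subtraction.
def fibDefect (P : ℤ → ℤ) (m : ℕ) : ℤ := Nat.fib (2 * m + 1) - P (m + 1)

namespace IsKPell

variable {k : ℕ} {P : ℤ → ℤ} (hP : IsKPell k P)
include hP

theorem nonneg (hk : 1 ≤ k) {n : ℤ} (hn : 2 - (k : ℤ) ≤ n) : 0 ≤ P n := by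
  suffices ∀ N : ℕ, ∀ n : ℤ, 2 - (k : ℤ) ≤ n → n ≤ N → 0 ≤ P n from
    this n.toNat n hn (by omega)
  intro N
  induction N with
  | zero => intro n hn hn0; rw [hP.eq_zero n hn hn0]
  | succ N ih =>
    intro n hn hnN
    rcases lt_or_eq_of_le hnN with hlt | rfl
    · exact ih n hn (by omega)
    rcases Nat.eq_zero_or_pos N with rfl | hN
    · simp [hP.one]
    rw [hP.recurrence _ (by omega)]
    have hsum : 0 ≤ ∑ i ∈ Icc (2 : ℕ) k, P ((N + 1 : ℕ) - i) :=
      sum_nonneg fun i hi => ih _ (by simp at hi; omega) (by simp at hi; omega)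
    linarith [ih ((N + 1 : ℕ) - 1) (by omega) (by omega)]

theorem two : P 2 = 2 := by
  have hsum : ∑ i ∈ Icc (2 : ℕ) k, P (2 - i) = 0 :=
    sum_eq_zero fun i hi => hP.eq_zero _ (by simp at hi; omega) (by simp at hi; omega)
  rw [hP.recurrence 2 le_rfl, hsum, show (2 : ℤ) - 1 = 1 by norm_num, hP.one]
  norm_num

theorem eq_three_mul_sub (hk : 1 ≤ k) {n : ℤ} (hn : 3 ≤ n) :
    P n = 3 * P (n - 1) - P (n - 2) - P (n - 1 - k) := by
  have h := sum_Icc_sub_sum_Icc_sub_one P n hk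
  have hn1 := hP.recurrence (n - 1) (by omega)
  rw [show n - 1 - 1 = n - 2 by ring] at hn1
  linarith [hP.recurrence n (by omega)]

theorem fibDefect_add_two (hk : 1 ≤ k) (m : ℕ) :
    fibDefect P (m + 2) = 3 * fibDefect P (m + 1) - fibDefect P m + P (m + 2 - k) := by
  have hfib := Nat.fib_add_four_eq_three_mul_sub (2 * m + 1)
  have hP3 : P (m + 2 + 1) = 3 * P (m + 1 + 1) - P (m + 1) - P (m + 2 - k) := by
    rw [hP.eq_three_mul_sub hk (by omega)]
    ring_nf
  simp only [fibDefect, show 2 * (m + 2) + 1 = 2 * m + 1 + 4 by ring,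
    show 2 * (m + 1) + 1 = 2 * m + 1 + 2 by ring]
  push_cast
  rw [hfib, hP3]
  ring

theorem fibDefect_zero : fibDefect P 0 = 0 := by
  simp [fibDefect, hP.one]

theorem fibDefect_one : fibDefect P 1 = 0 := by
  simp [fibDefect, hP.two, Nat.fib_add_two]

theorem fibDefect_nonneg (hk : 1 ≤ k) (m : ℕ) : 0 ≤ fibDefect P m :=
  (nonneg_and_le_succ_of_rec hP.fibDefect_zero hP.fibDefect_one (hP.fibDefect_add_two hk)
    (fun _ => hP.nonneg hk (by omega)) m).1

theorem fibDefect_eq_zero_iff (hk : 1 ≤ k) (m : ℕ) : fibDefect P m = 0 ↔ m ≤ k := by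
  have hrec := hP.fibDefect_add_two hk
  constructor
  · intro hm
    by_contra! hkm
    have hc := forcing_le_of_rec hP.fibDefect_zero hP.fibDefect_one hrec
      (fun _ => hP.nonneg hk (by omega)) (k - 1)
    rw [show ((k - 1 : ℕ) : ℤ) + 2 - k = 1 by omega, show k - 1 + 2 = k + 1 by omega,
      hP.one] at hc
    have hmono := monotone_of_rec hP.fibDefect_zero hP.fibDefect_one hrec
      (fun _ => hP.nonneg hk (by omega)) (show k + 1 ≤ m from hkm)
    linarith
  · intro hm
    exact eq_zero_of_rec hP.fibDefect_zero hP.fibDefect_one hrec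
      fun j hj => hP.eq_zero _ (by omega) (by omega)

end IsKPell

/-- For all k ≥ 2 and n ≥ 1, P_n^{(k)} ≤ F_{2n-1}, with equality iff n ≤ k+1. -/
theorem kPell_le_fib (k : ℕ) (hk : 2 ≤ k) (P : ℤ → ℤ)
    (hP0 : ∀ n : ℤ, 2 - (k : ℤ) ≤ n → n ≤ 0 → P n = 0)
    (hP1 : P 1 = 1)
    (hPrec : ∀ n : ℤ, 2 ≤ n → P n = 2 * P (n - 1) + ∑ i ∈ Finset.Icc (2 : ℕ) k, P (n - i)) :
    ∀ n : ℕ, 1 ≤ n →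
      P (n : ℤ) ≤ (Nat.fib (2 * n - 1) : ℤ) ∧
        (P (n : ℤ) = (Nat.fib (2 * n - 1) : ℤ) ↔ n ≤ k + 1) := by
  intro n hn
  obtain ⟨m, rfl⟩ : ∃ m, n = m + 1 := ⟨n - 1, by omega⟩
  have hP : IsKPell k P := ⟨hP0, hP1, hPrec⟩
  have hnonneg := hP.fibDefect_nonneg (by omega) m
  have hzero := hP.fibDefect_eq_zero_iff (by omega) m
  rw [fibDefect] at hnonneg hzero
  rw [show 2 * (m + 1) - 1 = 2 * m + 1 by omega]
  push_cast
  refine ⟨by linarith, ?_⟩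
  rw [eq_comm, ← sub_eq_zero]
  exact hzero.trans (by omega)
end
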